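/- Let F₁, …, F_K : 𝒞_n → ℝ and let μ be the probability measure on 𝒞_n with μ(x) ∝ exp(Σ_{k=1}^K F_k(x)). Then the ℓ²→ℓ² operator norm of the influence matrix of μ satisfies ‖A^μ‖_op ≤ Σ_{k=1}^K ‖D^{F_k}‖_op. -/

import Mathlib

noncomputable section

open scoped BigOperators

/-- Discrete derivative on the cube: `∂_i F(x) = (F(x^{i+}) − F(x^{i−}))/2`. -/
def dderiv {n : ℕ} (F : (Fin n → Bool) → ℝ) (i : Fin n) (b : Fin n → Bool) : ℝ :=
  (F (Function.update b i true) - F (Function.update b i false)) / 2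

/-- The derivative matrix `D^F_{ij} = max_x |∂_i ∂_j F(x)|`. -/
def derivMat {n : ℕ} (F : (Fin n → Bool) → ℝ) (i j : Fin n) : ℝ :=
  ⨆ b : Fin n → Bool, |dderiv (dderiv F j) i b|

/-- The `ℓ²→ℓ²` operator norm of an `n×n` matrix. -/
def matOpNorm {n : ℕ} (M : Fin n → Fin n → ℝ) : ℝ :=
  sSup { r : ℝ | ∃ x : Fin n → ℝ, (∑ i, x i ^ 2) = 1 ∧
    r = Real.sqrt (∑ i, (∑ j, M i j * x j) ^ 2) }

/-- The conditional mean of the -th spin given the other coordinates. -/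
def condMean {n : ℕ} (μ : (Fin n → Bool) → ℝ) (i : Fin n) (b : Fin n → Bool) : ℝ :=
  (μ (Function.update b i true) - μ (Function.update b i false)) /
    (μ (Function.update b i true) + μ (Function.update b i false))

/-- The influence matrix of a measure on the cube: zero on the diagonal, and for
`i ≠ j`, half of the maximal change of `condMean μ i` when flipping the `j`-th bit. -/
def inflMat {n : ℕ} (μ : (Fin n → Bool) → ℝ) (i j : Fin n) : ℝ :=
  if i = j then 0
  else (1 / 2) * ⨆ b : Fin n → Bool,
    |condMean μ i (Function.update b j true) - condMean μ i (Function.update b j false)|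

/-!
Write `H = Σ_k F_k`, so that `μ ∝ exp H`. The normalising constant cancels in the conditional
mean, which is `m_i = tanh (∂_i H)`. As `tanh` is 1-Lipschitz, flipping spin `j` changes `m_i` by
at most `|∂_i H(x^{j+}) − ∂_i H(x^{j−})| = 2 |∂_j ∂_i H(x)|`, hence `A^μ ≤ D^H ≤ Σ_k D^{F_k}`
entrywise. The operator norm is monotone on entrywise nonnegative matrices (test it on `|x|`) and
subadditive.
-/

open Finset Function

namespace Real

theorem hasDerivAt_tanh (x : ℝ) : HasDerivAt tanh (1 / cosh x ^ 2) x := by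
  have h := (hasDerivAt_sinh x).div (hasDerivAt_cosh x) (cosh_pos x).ne'
  rw [show sinh / cosh = tanh from funext fun y => (tanh_eq_sinh_div_cosh y).symm] at h
  refine h.congr_deriv ?_
  rw [← cosh_sq_sub_sinh_sq x]
  ring

theorem lipschitzWith_tanh : LipschitzWith 1 tanh := by
  refine lipschitzWith_of_nnnorm_deriv_le (fun x => (hasDerivAt_tanh x).differentiableAt)
    fun x => ?_
  rw [(hasDerivAt_tanh x).deriv, ← NNReal.coe_le_coe, coe_nnnorm, norm_eq_abs, NNReal.coe_one,
    abs_of_nonneg (by positivity), div_le_one (by positivity)]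
  nlinarith [one_le_cosh x]

theorem exp_sub_exp_div_exp_add_exp (u v : ℝ) :
    (exp u - exp v) / (exp u + exp v) = tanh ((u - v) / 2) := by
  have hu : exp u = exp ((u + v) / 2) * exp ((u - v) / 2) := by rw [← exp_add]; ring_nf
  have hv : exp v = exp ((u + v) / 2) * exp (-((u - v) / 2)) := by rw [← exp_add]; ring_nf
  rw [tanh_eq, hu, hv, ← mul_sub, ← mul_add, mul_div_mul_left _ _ (exp_pos _).ne']

end Real

section DiscreteDerivative

variable {n : ℕ}

theorem two_mul_dderiv (G : (Fin n → Bool) → ℝ) (j : Fin n) (b : Fin n → Bool) :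
    2 * dderiv G j b = G (update b j true) - G (update b j false) := by
  rw [dderiv]; ring

theorem dderiv_sum {ι : Type*} (s : Finset ι) (F : ι → (Fin n → Bool) → ℝ) (i : Fin n) :
    dderiv (fun b => ∑ k ∈ s, F k b) i = fun b => ∑ k ∈ s, dderiv (F k) i b := by
  funext b
  simp only [dderiv, ← sum_sub_distrib, sum_div]

theorem dderiv_dderiv_comm (F : (Fin n → Bool) → ℝ) {i j : Fin n} (h : i ≠ j) :
    dderiv (dderiv F j) i = dderiv (dderiv F i) j := by
  funext b
  simp only [dderiv, update_comm h]
  ring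

theorem abs_dderiv_dderiv_le_derivMat (F : (Fin n → Bool) → ℝ) (i j : Fin n)
    (b : Fin n → Bool) : |dderiv (dderiv F j) i b| ≤ derivMat F i j :=
  le_ciSup (f := fun b => |dderiv (dderiv F j) i b|) (Set.finite_range _).bddAbove b

theorem derivMat_nonneg (F : (Fin n → Bool) → ℝ) (i j : Fin n) : 0 ≤ derivMat F i j :=
  Real.iSup_nonneg fun _ => abs_nonneg _

theorem derivMat_sum_le {ι : Type*} (s : Finset ι) (F : ι → (Fin n → Bool) → ℝ) (i j : Fin n) :
    derivMat (fun b => ∑ k ∈ s, F k b) i j ≤ ∑ k ∈ s, derivMat (F k) i j :=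
  ciSup_le fun b => by
    rw [dderiv_sum, dderiv_sum]
    exact (abs_sum_le_sum_abs _ _).trans
      (sum_le_sum fun k _ => abs_dderiv_dderiv_le_derivMat (F k) i j b)

end DiscreteDerivative

section Influence

theorem inflMat_nonneg {n : ℕ} (μ : (Fin n → Bool) → ℝ) (i j : Fin n) : 0 ≤ inflMat μ i j := by
  rw [inflMat]
  split_ifs
  exacts [le_rfl, mul_nonneg (by norm_num) (Real.iSup_nonneg fun _ => abs_nonneg _)]

variable {n : ℕ} (H : (Fin n → Bool) → ℝ) (μ : (Fin n → Bool) → ℝ) {Z : ℝ}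

theorem condMean_eq_tanh_dderiv (hZ : Z ≠ 0) (hμ : ∀ b, μ b = Real.exp (H b) / Z)
    (i : Fin n) (b : Fin n → Bool) : condMean μ i b = Real.tanh (dderiv H i b) := by
  rw [condMean, hμ, hμ, div_sub_div_same, ← add_div, div_div_div_cancel_right₀ hZ,
    Real.exp_sub_exp_div_exp_add_exp, dderiv]

theorem inflMat_le_derivMat (hZ : Z ≠ 0) (hμ : ∀ b, μ b = Real.exp (H b) / Z) (i j : Fin n) :
    inflMat μ i j ≤ derivMat H i j := by
  rw [inflMat]
  split_ifs with hij
  · exact derivMat_nonneg H i j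
  have hflip : ∀ b, |condMean μ i (update b j true) - condMean μ i (update b j false)|
      ≤ 2 * derivMat H i j := fun b => by
    simp only [condMean_eq_tanh_dderiv H μ hZ hμ]
    calc |Real.tanh (dderiv H i (update b j true)) - Real.tanh (dderiv H i (update b j false))|
        ≤ |dderiv H i (update b j true) - dderiv H i (update b j false)| := by
          simpa only [Real.dist_eq, NNReal.coe_one, one_mul] using
            Real.lipschitzWith_tanh.dist_le_mul _ _
      _ = 2 * |dderiv (dderiv H j) i b| := by
          rw [← two_mul_dderiv, ← dderiv_dderiv_comm H hij, abs_mul, abs_two]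
      _ ≤ 2 * derivMat H i j := by
          gcongr; exact abs_dderiv_dderiv_le_derivMat H i j b
  linarith [ciSup_le hflip]

end Influence

section OperatorNorm

theorem sqrt_sum_sq_eq_norm {ι : Type*} [Fintype ι] (a : ι → ℝ) :
    √(∑ i, a i ^ 2) = ‖WithLp.toLp 2 a‖ := by
  simp only [EuclideanSpace.norm_eq, Real.norm_eq_abs, sq_abs]

theorem sqrt_sum_sq_le_of_abs_le {ι : Type*} [Fintype ι] {a b : ι → ℝ} (h : ∀ i, |a i| ≤ b i) :
    √(∑ i, a i ^ 2) ≤ √(∑ i, b i ^ 2) :=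
  Real.sqrt_le_sqrt <| sum_le_sum fun i _ => sq_le_sq' (abs_le.mp (h i)).1 (abs_le.mp (h i)).2

variable {n : ℕ}

theorem matOpNorm_bddAbove (M : Fin n → Fin n → ℝ) :
    BddAbove { r : ℝ | ∃ x : Fin n → ℝ, (∑ i, x i ^ 2) = 1 ∧
      r = √(∑ i, (∑ j, M i j * x j) ^ 2) } := by
  refine ⟨√(∑ i, ∑ j, M i j ^ 2), ?_⟩
  rintro r ⟨x, hx, rfl⟩
  refine Real.sqrt_le_sqrt <| sum_le_sum fun i _ => ?_
  simpa only [hx, mul_one] using sum_mul_sq_le_sq_mul_sq univ (M i) x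

theorem le_matOpNorm (M : Fin n → Fin n → ℝ) {x : Fin n → ℝ} (hx : (∑ i, x i ^ 2) = 1) :
    √(∑ i, (∑ j, M i j * x j) ^ 2) ≤ matOpNorm M :=
  le_csSup (matOpNorm_bddAbove M) ⟨x, hx, rfl⟩

theorem matOpNorm_le {M : Fin n → Fin n → ℝ} {C : ℝ} (hC : 0 ≤ C)
    (h : ∀ x : Fin n → ℝ, (∑ i, x i ^ 2) = 1 → √(∑ i, (∑ j, M i j * x j) ^ 2) ≤ C) :
    matOpNorm M ≤ C :=
  Real.sSup_le (fun _ ⟨x, hx, hr⟩ => hr ▸ h x hx) hC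

theorem matOpNorm_nonneg (M : Fin n → Fin n → ℝ) : 0 ≤ matOpNorm M :=
  Real.sSup_nonneg fun _ ⟨_, _, hr⟩ => hr ▸ Real.sqrt_nonneg _

theorem matOpNorm_mono {A B : Fin n → Fin n → ℝ} (hA : ∀ i j, 0 ≤ A i j)
    (hAB : ∀ i j, A i j ≤ B i j) : matOpNorm A ≤ matOpNorm B := by
  refine matOpNorm_le (matOpNorm_nonneg B) fun x hx => ?_
  have hx' : (∑ i, |x i| ^ 2) = 1 := by simpa only [sq_abs] using hx
  refine (sqrt_sum_sq_le_of_abs_le fun i => ?_).trans (le_matOpNorm B hx')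
  calc |∑ j, A i j * x j| ≤ ∑ j, |A i j * x j| := abs_sum_le_sum_abs _ _
    _ = ∑ j, A i j * |x j| := by simp only [abs_mul, abs_of_nonneg (hA i _)]
    _ ≤ ∑ j, B i j * |x j| := by gcongr with j; exact hAB i j

theorem matOpNorm_add_le (A B : Fin n → Fin n → ℝ) :
    matOpNorm (fun i j => A i j + B i j) ≤ matOpNorm A + matOpNorm B := by
  refine matOpNorm_le (add_nonneg (matOpNorm_nonneg A) (matOpNorm_nonneg B)) fun x hx => ?_
  calc √(∑ i, (∑ j, (A i j + B i j) * x j) ^ 2)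
      = ‖WithLp.toLp 2 (fun i => ∑ j, A i j * x j) +
          WithLp.toLp 2 (fun i => ∑ j, B i j * x j)‖ := by
        rw [← WithLp.toLp_add, ← sqrt_sum_sq_eq_norm]
        simp only [Pi.add_apply, add_mul, sum_add_distrib]
    _ ≤ _ := norm_add_le _ _
    _ ≤ matOpNorm A + matOpNorm B := by
        rw [← sqrt_sum_sq_eq_norm, ← sqrt_sum_sq_eq_norm]
        exact add_le_add (le_matOpNorm A hx) (le_matOpNorm B hx)

theorem matOpNorm_sum_le {ι : Type*} (s : Finset ι) (M : ι → Fin n → Fin n → ℝ) :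
    matOpNorm (fun i j => ∑ k ∈ s, M k i j) ≤ ∑ k ∈ s, matOpNorm (M k) := by
  classical
  induction s using Finset.induction_on with
  | empty => exact matOpNorm_le le_rfl fun x _ => by simp
  | insert a s ha ih =>
    simp only [sum_insert ha]
    exact (matOpNorm_add_le _ _).trans (add_le_add_right ih _)

end OperatorNorm

/-- **Additivity of Dobrushin-type influence bounds** (Lemma `additivedob` of the
paper): if `μ(x) ∝ exp(Σ_k F_k(x))`, then `‖A^μ‖_op ≤ Σ_k ‖D^{F_k}‖_op`. -/
theorem influence_le_sum_derivMat (n K : ℕ) (F : Fin K → (Fin n → Bool) → ℝ)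
    (μ : (Fin n → Bool) → ℝ)
    (hμ : ∀ b, μ b = Real.exp (∑ k, F k b) / ∑ b', Real.exp (∑ k, F k b')) :
    matOpNorm (inflMat μ) ≤ ∑ k, matOpNorm (derivMat (F k)) := by
  have hZ : ∑ b', Real.exp (∑ k, F k b') ≠ 0 :=
    (sum_pos (fun _ _ => Real.exp_pos _) univ_nonempty).ne'
  calc matOpNorm (inflMat μ)
      ≤ matOpNorm (fun i j => ∑ k, derivMat (F k) i j) :=
        matOpNorm_mono (inflMat_nonneg μ) fun i j =>
          (inflMat_le_derivMat _ μ hZ hμ i j).trans (derivMat_sum_le _ F i j)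
    _ ≤ ∑ k, matOpNorm (derivMat (F k)) := matOpNorm_sum_le _ _
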